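/- Let m ≥ 2 be an integer and 1 ≤ p, q ≤ ∞. Suppose there is a constant C > 0 such that (∫₀¹ |f̂(x, x^m)|^q dx)^{1/q} ≤ C ‖f‖_{L^p(ℝ²)} for every Schwartz function f on ℝ². Then 1/q ≥ (m+1)/p'. -/

import Mathlib

/-!
Knapp's example. Take a Schwartz function `f` whose Fourier transform equals `1` on the ball of
radius `2`, and for `0 < a ≤ 1` compose it with the dilation `(x, y) ↦ (a x, aᵐ y)`. The Fourier
transform of the result is `a^{-(m+1)} 𝓕f(ξ₁/a, ξ₂/aᵐ)`, of modulus `a^{-(m+1)}` on the arc of the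
curve over `(0, a]`, so the left-hand side is at least `a^{1/q-(m+1)}`, while the `Lᵖ` norm is
`a^{-(m+1)/p} ‖f‖_p`. Letting `a → 0` forces `1/q - (m+1) + (m+1)/p ≥ 0`.
-/

open MeasureTheory Set
open scoped FourierTransform ENNReal SchwartzMap RealInnerProductSpace

section LinearChangeOfVariables

variable {V : Type*} [NormedAddCommGroup V] [InnerProductSpace ℝ V] [FiniteDimensional ℝ V]
  [MeasurableSpace V] [BorelSpace V]

lemma map_volume_continuousLinearEquiv (L : V ≃L[ℝ] V) :
    Measure.map L volume = ENNReal.ofReal |(L : V →L[ℝ] V).det⁻¹| • volume :=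
  Measure.map_linearMap_addHaar_eq_smul_addHaar volume L.toLinearEquiv.isUnit_det'.ne_zero

lemma integral_comp_continuousLinearEquiv {E : Type*} [NormedAddCommGroup E] [NormedSpace ℝ E]
    (L : V ≃L[ℝ] V) (f : V → E) :
    ∫ x, f (L x) = |(L : V →L[ℝ] V).det⁻¹| • ∫ y, f y := by
  have hL : MeasurableEmbedding L := L.toHomeomorph.measurableEmbedding
  rw [← hL.integral_map, map_volume_continuousLinearEquiv, integral_smul_measure,
    ENNReal.toReal_ofReal (abs_nonneg _)]

lemma eLpNorm_comp_continuousLinearEquiv {E : Type*} [NormedAddCommGroup E]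
    (L : V ≃L[ℝ] V) {f : V → E} (hf : AEStronglyMeasurable f volume) {p : ℝ≥0∞} (hp : p ≠ ∞) :
    eLpNorm (f ∘ L) p volume =
      ENNReal.ofReal |(L : V →L[ℝ] V).det⁻¹| ^ (1 / p).toReal * eLpNorm f p volume := by
  rw [← eLpNorm_map_measure, map_volume_continuousLinearEquiv L, eLpNorm_smul_measure_of_ne_top hp,
    smul_eq_mul]
  · rw [map_volume_continuousLinearEquiv L]; exact hf.smul_measure _
  · exact L.continuous.aemeasurable

lemma fourier_comp_continuousLinearEquiv {E : Type*} [NormedAddCommGroup E] [NormedSpace ℂ E]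
    (L : V ≃L[ℝ] V) (hL : (L : V →ₗ[ℝ] V).IsSymmetric) (f : V → E) (ξ : V) :
    𝓕 (f ∘ L) ξ = |(L : V →L[ℝ] V).det⁻¹| • 𝓕 f (L.symm ξ) := by
  have hinner (v : V) : ⟪L v, L.symm ξ⟫ = ⟪v, ξ⟫ := by
    simpa using hL v (L.symm ξ)
  simp only [Real.fourier_eq, Function.comp_apply, ← hinner]
  exact integral_comp_continuousLinearEquiv L (fun y => 𝐞 (-⟪y, L.symm ξ⟫) • f y)

end LinearChangeOfVariables

namespace EuclideanSpace

variable {ι : Type*} [Fintype ι]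

noncomputable def diagonalDilation (d : ι → ℝˣ) : EuclideanSpace ℝ ι ≃L[ℝ] EuclideanSpace ℝ ι :=
  LinearEquiv.toContinuousLinearEquiv
    { toFun x := WithLp.toLp 2 fun i => (d i : ℝ) * x i
      invFun x := WithLp.toLp 2 fun i => ((d i)⁻¹ : ℝˣ) * x i
      map_add' x y := by ext i; simp [mul_add]
      map_smul' c x := by ext i; simp only [PiLp.smul_apply, smul_eq_mul, Real.ringHom_apply]; ring
      left_inv x := by ext i; simp
      right_inv x := by ext i; simp }

@[simp]
lemma diagonalDilation_apply (d : ι → ℝˣ) (x : EuclideanSpace ℝ ι) (i : ι) :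
    diagonalDilation d x i = d i * x i := rfl

@[simp]
lemma diagonalDilation_symm_apply (d : ι → ℝˣ) (x : EuclideanSpace ℝ ι) (i : ι) :
    (diagonalDilation d).symm x i = ((d i)⁻¹ : ℝˣ) * x i := rfl

lemma det_diagonalDilation [DecidableEq ι] (d : ι → ℝˣ) :
    (diagonalDilation d : EuclideanSpace ℝ ι →L[ℝ] EuclideanSpace ℝ ι).det = ∏ i, (d i : ℝ) := by
  rw [ContinuousLinearMap.det, ← LinearMap.det_toMatrix (EuclideanSpace.basisFun ι ℝ).toBasis,
    ← Matrix.det_diagonal]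
  congr 1
  ext i j
  simp [LinearMap.toMatrix_apply, Matrix.diagonal_apply]

lemma isSymmetric_diagonalDilation (d : ι → ℝˣ) :
    (diagonalDilation d : EuclideanSpace ℝ ι →ₗ[ℝ] EuclideanSpace ℝ ι).IsSymmetric := by
  intro x y
  change ⟪diagonalDilation d x, y⟫ = ⟪x, diagonalDilation d y⟫
  simp only [PiLp.inner_apply, RCLike.inner_apply, conj_trivial, diagonalDilation_apply]
  exact Finset.sum_congr rfl fun i _ => by ring

end EuclideanSpace

lemma exists_schwartzMap_fourier_eq_one_on_closedBall {V : Type*} [NormedAddCommGroup V]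
    [InnerProductSpace ℝ V] [FiniteDimensional ℝ V] [MeasurableSpace V] [BorelSpace V]
    {R : ℝ} (hR : 0 < R) :
    ∃ f : 𝓢(V, ℂ), ∀ ξ ∈ Metric.closedBall (0 : V) R, 𝓕 (f : V → ℂ) ξ = 1 := by
  let b : ContDiffBump (0 : V) := ⟨R, R + 1, hR, by linarith⟩
  let g : 𝓢(V, ℂ) := HasCompactSupport.toSchwartzMap (f := fun x => (b x : ℂ))
    (b.hasCompactSupport.comp_left Complex.ofReal_zero) (Complex.ofRealCLM.contDiff.comp b.contDiff)
  refine ⟨𝓕⁻ g, fun ξ hξ => ?_⟩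
  rw [← SchwartzMap.fourier_coe, FourierTransform.fourier_fourierInv_eq]
  exact congrArg Complex.ofReal (b.one_of_mem_closedBall hξ)

lemma nonneg_of_forall_rpow_le {s B : ℝ} (h : ∀ a : ℝ, 0 < a → a ≤ 1 → a ^ s ≤ B) : 0 ≤ s := by
  by_contra! hs
  obtain ⟨a, hBa, ha⟩ := ((tendsto_rpow_neg_nhdsGT_zero hs).eventually_gt_atTop B).and
    (Ioc_mem_nhdsGT one_pos) |>.exists
  exact (h a ha.1 ha.2).not_gt hBa

local notation "ℝ²" => EuclideanSpace ℝ (Fin 2)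

section KnappExample

variable (m : ℕ)

noncomputable def powCurve (x : ℝ) : ℝ² := (EuclideanSpace.equiv (Fin 2) ℝ).symm ![x, x ^ m]

noncomputable def powCurveDilation {a : ℝ} (ha : 0 < a) : ℝ² ≃L[ℝ] ℝ² :=
  EuclideanSpace.diagonalDilation ![Units.mk0 a ha.ne', Units.mk0 a ha.ne' ^ m]

variable {m}

lemma det_powCurveDilation {a : ℝ} (ha : 0 < a) :
    (powCurveDilation m ha : ℝ² →L[ℝ] ℝ²).det = a ^ (m + 1) := by
  simp [powCurveDilation, EuclideanSpace.det_diagonalDilation, Fin.prod_univ_two, pow_succ']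

lemma continuous_powCurve : Continuous (powCurve m) := by
  unfold powCurve
  fun_prop

lemma powCurveDilation_symm_powCurve {a : ℝ} (ha : 0 < a) (x : ℝ) :
    (powCurveDilation m ha).symm (powCurve m x) = powCurve m (x / a) := by
  ext i
  fin_cases i <;> simp [powCurveDilation, powCurve, div_eq_inv_mul, mul_pow]

lemma norm_powCurve_le {x : ℝ} (hx : x ∈ Icc (0 : ℝ) 1) : ‖powCurve m x‖ ≤ 2 := by
  have hxm : x ^ m ∈ Icc (0 : ℝ) 1 := ⟨pow_nonneg hx.1 m, pow_le_one₀ hx.1 hx.2⟩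
  rw [EuclideanSpace.norm_eq, Real.sqrt_le_left two_pos.le]
  simp only [powCurve, PiLp.continuousLinearEquiv_symm_apply, Real.norm_eq_abs, sq_abs,
    Fin.sum_univ_two, Matrix.cons_val_zero, Matrix.cons_val_one, Matrix.cons_val_fin_one]
  nlinarith [hx.1, hx.2, hxm.1, hxm.2]

lemma inv_pow_succ_eq_rpow {a : ℝ} (ha : 0 < a) : (a ^ (m + 1))⁻¹ = a ^ (-((m : ℝ) + 1)) := by
  rw [Real.rpow_neg ha.le, ← Real.rpow_natCast]
  push_cast
  rfl

lemma norm_fourier_comp_powCurveDilation {f : 𝓢(ℝ², ℂ)}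
    (hf : ∀ ξ ∈ Metric.closedBall (0 : ℝ²) 2, 𝓕 (f : ℝ² → ℂ) ξ = 1)
    {a x : ℝ} (ha : 0 < a) (hx : x ∈ Icc 0 a) :
    ‖𝓕 (f ∘ powCurveDilation m ha) (powCurve m x)‖ = a ^ (-((m : ℝ) + 1)) := by
  have hxa : x / a ∈ Icc (0 : ℝ) 1 := ⟨div_nonneg hx.1 ha.le, div_le_one_of_le₀ hx.2 ha.le⟩
  rw [fourier_comp_continuousLinearEquiv _ (EuclideanSpace.isSymmetric_diagonalDilation _),
    det_powCurveDilation, powCurveDilation_symm_powCurve,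
    hf _ (mem_closedBall_zero_iff.2 (norm_powCurve_le hxa)), norm_smul, norm_one, mul_one,
    Real.norm_eq_abs, abs_abs, abs_of_pos (by positivity), inv_pow_succ_eq_rpow ha]

lemma rpow_le_integral_norm_fourier_comp_powCurveDilation {f : 𝓢(ℝ², ℂ)}
    (hf : ∀ ξ ∈ Metric.closedBall (0 : ℝ²) 2, 𝓕 (f : ℝ² → ℂ) ξ = 1)
    {q : ℝ} (hq : 0 < q) {a : ℝ} (ha : 0 < a) (ha1 : a ≤ 1) :
    a ^ (1 / q - ((m : ℝ) + 1)) ≤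
      (∫ x in Ioc (0 : ℝ) 1, ‖𝓕 (f ∘ powCurveDilation m ha) (powCurve m x)‖ ^ q) ^ (1 / q) := by
  set G : ℝ → ℝ := fun x => ‖𝓕 (f ∘ powCurveDilation m ha) (powCurve m x)‖ ^ q
  have hG : Continuous G := by
    have : Continuous (𝓕 (f ∘ powCurveDilation m ha)) :=
      (𝓕 (SchwartzMap.compCLMOfContinuousLinearEquiv ℝ (powCurveDilation m ha) f)).continuous
    exact ((this.comp continuous_powCurve).norm).rpow_const fun _ => Or.inr hq.le
  have hG_const : ∀ x ∈ Ioc 0 a, G x = a ^ (-((m : ℝ) + 1) * q) := fun x hx => by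
    simp only [G, norm_fourier_comp_powCurveDilation hf ha (Ioc_subset_Icc_self hx),
      ← Real.rpow_mul ha.le]
  have hmass : a * a ^ (-((m : ℝ) + 1) * q) ≤ ∫ x in Ioc (0 : ℝ) 1, G x :=
    calc a * a ^ (-((m : ℝ) + 1) * q) = ∫ x in Ioc (0 : ℝ) a, G x := by
          rw [setIntegral_congr_fun measurableSet_Ioc hG_const]
          simp [ha.le]
      _ ≤ ∫ x in Ioc (0 : ℝ) 1, G x :=
          setIntegral_mono_set hG.integrableOn_Ioc
            (Filter.Eventually.of_forall fun _ => by positivity)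
            (Ioc_subset_Ioc_right ha1).eventuallyLE
  calc a ^ (1 / q - ((m : ℝ) + 1)) = (a ^ (1 + -((m : ℝ) + 1) * q)) ^ (1 / q) := by
        rw [← Real.rpow_mul ha.le]
        congr 1
        field_simp
        ring
    _ = (a * a ^ (-((m : ℝ) + 1) * q)) ^ (1 / q) := by rw [Real.rpow_add ha, Real.rpow_one]
    _ ≤ _ := Real.rpow_le_rpow (by positivity) hmass (by positivity)

lemma eLpNorm_comp_powCurveDilation (f : 𝓢(ℝ², ℂ)) {p : ℝ} (hp : 0 < p) {a : ℝ} (ha : 0 < a) :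
    (eLpNorm (f ∘ powCurveDilation m ha) (ENNReal.ofReal p) volume).toReal =
      a ^ (-((m : ℝ) + 1) / p) * (eLpNorm f (ENNReal.ofReal p) volume).toReal := by
  rw [eLpNorm_comp_continuousLinearEquiv _ f.continuous.aestronglyMeasurable ENNReal.ofReal_ne_top,
    det_powCurveDilation, ENNReal.toReal_mul, ← ENNReal.toReal_rpow, ENNReal.toReal_ofReal
    (abs_nonneg _), abs_of_pos (by positivity), inv_pow_succ_eq_rpow ha, ← Real.rpow_mul ha.le,
    one_div, ENNReal.toReal_inv, ENNReal.toReal_ofReal hp.le, div_eq_mul_inv]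

end KnappExample

theorem statement2 (m : ℕ) (p q C : ℝ)
    (hp : 1 ≤ p) (hq : 1 ≤ q)
    (h : ∀ f : SchwartzMap (EuclideanSpace ℝ (Fin 2)) ℂ,
      (∫ x in Ioc (0:ℝ) 1,
          ‖𝓕 (⇑f) ((EuclideanSpace.equiv (Fin 2) ℝ).symm ![x, x ^ m])‖ ^ q) ^ (1 / q) ≤
        C * (eLpNorm (⇑f) (ENNReal.ofReal p) volume).toReal) :
    ((m : ℝ) + 1) / (p / (p - 1)) ≤ 1 / q := by
  have hp0 : 0 < p := by linarith
  have hq0 : 0 < q := by linarith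
  obtain ⟨f, hf⟩ := exists_schwartzMap_fourier_eq_one_on_closedBall (V := ℝ²) two_pos
  set N : ℝ := (m : ℝ) + 1
  set K := (eLpNorm f (ENNReal.ofReal p) volume).toReal
  have hscaling (a : ℝ) (ha : 0 < a) (ha1 : a ≤ 1) : a ^ (1 / q - N + N / p) ≤ C * K := by
    have hknapp := (rpow_le_integral_norm_fourier_comp_powCurveDilation hf hq0 ha ha1).trans
      (h (SchwartzMap.compCLMOfContinuousLinearEquiv ℝ (powCurveDilation m ha) f))
    rw [SchwartzMap.compCLMOfContinuousLinearEquiv_apply,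
      eLpNorm_comp_powCurveDilation f hp0 ha] at hknapp
    calc a ^ (1 / q - N + N / p) = a ^ (1 / q - N) * a ^ (N / p) := Real.rpow_add ha _ _
      _ ≤ C * (a ^ (-N / p) * K) * a ^ (N / p) := by gcongr
      _ = C * K * (a ^ (-N / p) * a ^ (N / p)) := by ring
      _ = C * K := by rw [← Real.rpow_add ha, neg_div, neg_add_cancel, Real.rpow_zero, mul_one]
  have hexponent := nonneg_of_forall_rpow_le hscaling
  -- also for `p = 1`, where `p / (p - 1) = 0` and both sides vanish
  calc N / (p / (p - 1)) = N - N / p := by field_simp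
    _ ≤ 1 / q := by linarith
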